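/- Let a, b ≥ 2 be integers and let l₂, l₃ be integers with 0 ≤ l₂ ≤ a−2 and 0 ≤ l₃ ≤ b−2. Define the 4×4 matrix u over T = k[x,y,z] with rows (x, 0, −z^{b−l₃−1}, y^{a−l₂−1}), (0, x, y^{l₂+1}, z^{l₃+1}), (−z^{l₃+1}, y^{a−l₂−1}, −x, 0), (y^{l₂+1}, z^{b−l₃−1}, 0, −x). Then u·u = (x² + y^a + z^b)·I₄, i.e., (u,u) is a symmetric matrix factorization of x² + y^a + z^b. -/
import Mathlib


open MvPolynomial

/-- The symmetric matrix of Proposition `prop:mf:2ab:rk2` for the extension bundle with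
parameters `(l₂, l₃)` and weight type `(2, a, b)`. -/
noncomputable def uExt2ab (k : Type*) [Field k] (a b l₂ l₃ : ℕ) :
    Matrix (Fin 4) (Fin 4) (MvPolynomial (Fin 3) k) :=
  let x : MvPolynomial (Fin 3) k := X 0
  let y : MvPolynomial (Fin 3) k := X 1
  let z : MvPolynomial (Fin 3) k := X 2
  !![x, 0, -z ^ (b - l₃ - 1), y ^ (a - l₂ - 1);
     0, x, y ^ (l₂ + 1), z ^ (l₃ + 1);
     -z ^ (l₃ + 1), y ^ (a - l₂ - 1), -x, 0;
     y ^ (l₂ + 1), z ^ (b - l₃ - 1), 0, -x]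

theorem stmt_1 (k : Type*) [Field k] (a b l₂ l₃ : ℕ)
    (ha : 2 ≤ a) (hb : 2 ≤ b) (hl₂ : l₂ ≤ a - 2) (hl₃ : l₃ ≤ b - 2) :
    uExt2ab k a b l₂ l₃ * uExt2ab k a b l₂ l₃ =
      ((X 0 ^ 2 + X 1 ^ a + X 2 ^ b : MvPolynomial (Fin 3) k)) •
        (1 : Matrix (Fin 4) (Fin 4) (MvPolynomial (Fin 3) k)) := by
  have hy : (l₂ + 1) + (a - l₂ - 1) = a := by omega
  have hz : (l₃ + 1) + (b - l₃ - 1) = b := by omega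
  have hY : (X 1 : MvPolynomial (Fin 3) k) ^ (l₂ + 1) * X 1 ^ (a - l₂ - 1) = X 1 ^ a := by
    rw [← pow_add, hy]
  have hZ : (X 2 : MvPolynomial (Fin 3) k) ^ (l₃ + 1) * X 2 ^ (b - l₃ - 1) = X 2 ^ b := by
    rw [← pow_add, hz]
  ext i j
  fin_cases i <;> fin_cases j <;>
    simp [uExt2ab, Matrix.mul_apply, Fin.sum_univ_four, Matrix.one_apply] <;>
    ring_nf <;>
    rw [← hY, ← hZ] <;> ring
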